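/- For any k-tuple of partitions λ = (λ⁽¹⁾,...,λ⁽ᵏ⁾) into non-negative parts and any integer u, let λ⁺ be obtained from λ by adding m to every part of λ⁽ᵐ⁾ for each m ∈ {1,...,k}. Then applying the particle-motion insertion map Λ to (λ⁺, fs_{u-1}(λ⁺)) yields the same generalised frequency sequence as applying Λ to (λ, fs_u(λ)): Λ(λ⁺, fs_{u-1}(λ⁺)) = Λ(λ, fs_u(λ)). -/

import Mathlib

/-! Compare the two runs part by part, from `λ_{s₁-1}` down to `λ₀`. Before `λ_i` is inserted,
both sequences agree from the focus `u - 1 + 2i` of the `λ⁺` run on, and to the left they are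
still the frame sequences `fs_u` and `fs_{u-1}`, whose piles `mIdx i` sit at `u + 2i` and
`u - 1 + 2i`. Since positions `u + 2i` and `u + 2i + 1` are empty, the extra `mIdx i` motions of
the `λ⁺` run just carry its pile one step to the right, which reproduces the configuration the
`λ` run starts from; the remaining `λ_i` motions then coincide, because the process only sees
the entries to the right of its focus. -/

/-- The particle-motion process: `PPM (f, u) m (g, v)` means that starting from the
generalised frequency sequence `f` with focus at index `u`, after exactly `m` particle
motions (interleaved with the forced focus shifts) the process stops at the sequence `g`
with focus at index `v`.  With `h := f_w + f_{w+1}` the invariant sum of the focused pair: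
if `f_{w+1} + f_{w+2} = h` the focus shifts to `w+1` (no motion); if `f_{w+1} + f_{w+2} < h`
the pair `(f_w, f_{w+1})` becomes `(f_w - 1, f_{w+1} + 1)` (one motion).  The process stops
immediately after the `m`-th motion (or at once if `m = 0`). -/
inductive PPM : ((ℤ → ℕ) × ℤ) → ℕ → ((ℤ → ℕ) × ℤ) → Prop
  | zero (f : ℤ → ℕ) (w : ℤ) : PPM (f, w) 0 (f, w)
  | shift {f : ℤ → ℕ} {w : ℤ} {m : ℕ} {t : (ℤ → ℕ) × ℤ} (hm : 0 < m)
      (hcond : f (w+1) + f (w+2) = f w + f (w+1))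
      (h : PPM (f, w+1) m t) : PPM (f, w) m t
  | motion {f : ℤ → ℕ} {w : ℤ} {m : ℕ} {t : (ℤ → ℕ) × ℤ}
      (hcond : f (w+1) + f (w+2) < f w + f (w+1))
      (h : PPM (Function.update (Function.update f w (f w - 1)) (w+1) (f (w+1) + 1), w) m t) :
      PPM (f, w) (m+1) t

/-- `mIdx k s i` is the number of `m ∈ {1,…,k}` with `i < s m`; for `s₁ ≥ ⋯ ≥ s_k` and
`s_{m+1} ≤ i < s_m` this equals `m`, i.e. the superscript of the renamed part `λ_i`. -/
def mIdx (k : ℕ) (s : ℕ → ℕ) (i : ℕ) : ℕ :=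
  ((Finset.Icc 1 k).filter fun m => i < s m).card

/-- The `u`-frame sequence of a `k`-tuple of partitions with lengths `s_m - s_{m+1}`:
`s_k` pairs `(k,0)`, then `s_{k-1} - s_k` pairs `(k-1,0)`, …, then `s₁ - s₂` pairs
`(1,0)`, at consecutive pairs of positions starting at index `u`, and `0` elsewhere. -/
def frameSeq (k : ℕ) (s : ℕ → ℕ) (u : ℤ) : ℤ → ℕ := fun i =>
  if 0 ≤ i - u ∧ (i - u) % 2 = 0 then mIdx k s ((i - u) / 2).toNat else 0

/-- `IsLambda k s u P R` : `R` is the result of the insertion map `Λ` applied to the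
tuple of partitions whose renamed parts are `P 0, P 1, …, P (s 1 - 1)` (read from the
right, `P i` belonging to `λ^{(mIdx i)}`), starting from the `u`-frame sequence:
`R = (ppm_u^{(P 0)} ∘ ppm_{u+2}^{(P 1)} ∘ ⋯ ∘ ppm_{u+2s₁-2}^{(P (s₁-1))})(fs_u)`. -/
def IsLambda (k : ℕ) (s : ℕ → ℕ) (u : ℤ) (P : ℕ → ℕ) (R : ℤ → ℕ) : Prop :=
  ∃ g : ℕ → (ℤ → ℕ), g (s 1) = frameSeq k s u ∧
    (∀ i, i < s 1 → ∃ v : ℤ, PPM (g (i+1), u + 2*(i : ℤ)) (P i) (g i, v)) ∧ R = g 0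

namespace PPM

theorem apply_of_lt {p q : (ℤ → ℕ) × ℤ} {n : ℕ} (h : PPM p n q) {x : ℤ} (hx : x < p.2) :
    q.1 x = p.1 x := by
  induction h with
  | zero => rfl
  | shift _ _ _ ih => exact ih (by simp only at hx ⊢; omega)
  | motion _ _ ih =>
    simp only at hx ih ⊢
    rw [ih hx, Function.update_of_ne (by omega), Function.update_of_ne hx.ne]

theorem eq_of_zero {f g : ℤ → ℕ} {w v : ℤ} (h : PPM (f, w) 0 (g, v)) : g = f := by
  cases h with
  | zero => rfl
  | shift hm => exact absurd hm (lt_irrefl 0)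

theorem eqOn_of_eqOn {p p' q q' : (ℤ → ℕ) × ℤ} {n : ℕ} (h : PPM p n q) (h' : PPM p' n q')
    (hw : p'.2 = p.2) (hf : ∀ x, p.2 ≤ x → p'.1 x = p.1 x) :
    ∀ x, p.2 ≤ x → q'.1 x = q.1 x := by
  induction h generalizing p' q' with
  | zero f w =>
    obtain ⟨f', w'⟩ := p'
    simp only at hw
    subst w'
    cases h' with
    | zero => exact hf
    | shift hm => exact absurd hm (lt_irrefl 0)
  | @shift f w m t hm hcond h ih =>
    obtain ⟨f', w'⟩ := p'
    simp only at hw hf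
    subst w'
    cases h' with
    | zero => exact absurd hm (lt_irrefl 0)
    | shift _ _ h' =>
      intro x hx
      rcases eq_or_lt_of_le hx with rfl | hx
      · rw [h'.apply_of_lt (lt_add_one _), h.apply_of_lt (lt_add_one _)]
        exact hf _ le_rfl
      · exact ih h' rfl (fun y hy => hf y (by simp only at hy; omega)) x hx
    | motion hcond' =>
      rw [hf w le_rfl, hf (w + 1) (by omega), hf (w + 2) (by omega)] at hcond'
      omega
  | @motion f w m t hcond h ih =>
    obtain ⟨f', w'⟩ := p'
    simp only at hw hf
    subst w'
    cases h' with
    | shift _ hcond' =>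
      rw [hf w le_rfl, hf (w + 1) (by omega), hf (w + 2) (by omega)] at hcond'
      omega
    | motion _ h' =>
      refine ih h' rfl fun x hx => ?_
      simp only [Function.update_apply] at hx ⊢
      rw [hf w le_rfl, hf (w + 1) (by omega), hf x hx]

theorem drain {f : ℤ → ℕ} {w : ℤ} {t : (ℤ → ℕ) × ℤ} {m n : ℕ}
    (h₂ : f (w + 2) = 0) (h₀ : f w = m) (h : PPM (f, w) (n + m) t) :
    PPM (Function.update (Function.update f w 0) (w + 1) (f (w + 1) + m), w) n t := by
  induction m generalizing f with
  | zero =>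
    rw [Nat.add_zero, ← h₀, Function.update_eq_self, Function.update_eq_self]
    exact h
  | succ m ih =>
    cases h with
    | shift _ hcond => omega
    | motion _ h =>
      convert ih (by simp [h₂]) (by simp [h₀]) h using 2
      funext x
      simp only [Function.update_apply]
      split_ifs <;> omega

theorem eqOn_of_pile_shift {G G' H H' : ℤ → ℕ} {w : ℤ} {m n : ℕ} {v v' : ℤ}
    (h : PPM (G, w + 1) n (H, v)) (h' : PPM (G', w) (n + m) (H', v'))
    (hG' : G' w = m) (hG'₁ : G' (w + 1) = 0) (hG'₂ : G' (w + 2) = 0)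
    (hG : G w = 0) (hG₁ : G (w + 1) = m) (hGG' : ∀ x, w + 2 ≤ x → G' x = G x) :
    ∀ x, w ≤ x → H' x = H x := by
  have hd := drain hG'₂ hG' h'
  have hF : ∀ x, w ≤ x →
      Function.update (Function.update G' w 0) (w + 1) (G' (w + 1) + m) x = G x := by
    intro x hx
    simp only [Function.update_apply]
    split_ifs with h₁ h₂
    · rw [h₁, hG₁, hG'₁, Nat.zero_add]
    · rw [h₂, hG]
    · exact hGG' x (by omega)
  cases n with
  | zero =>
    intro x hx
    rw [hd.eq_of_zero, h.eq_of_zero]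
    exact hF x hx
  | succ n =>
    have hG₂ : G (w + 2) = 0 := by rw [← hGG' _ le_rfl, hG'₂]
    exact (shift n.succ_pos (by omega) h).eqOn_of_eqOn hd rfl hF

end PPM

lemma mIdx_eq_zero_of_le {k : ℕ} {s : ℕ → ℕ} (hs : AntitoneOn s (Set.Icc 1 k)) {j : ℕ}
    (hj : s 1 ≤ j) : mIdx k s j = 0 := by
  refine Finset.card_eq_zero.2 (Finset.filter_eq_empty_iff.2 fun m hm => ?_)
  have hm := Finset.mem_Icc.1 hm
  have := hs ⟨le_rfl, hm.1.trans hm.2⟩ ⟨hm.1, hm.2⟩ hm.1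
  omega

section frameSeq

variable (k : ℕ) (s : ℕ → ℕ) (u : ℤ)

lemma frameSeq_add_two_mul (i : ℕ) : frameSeq k s u (u + 2 * i) = mIdx k s i := by
  rw [frameSeq, if_pos (by omega)]
  congr 1
  omega

lemma frameSeq_eq_zero_of_emod_two_eq_one {x : ℤ} (hx : (x - u) % 2 = 1) :
    frameSeq k s u x = 0 :=
  if_neg (by omega)

lemma frameSeq_eq_zero_of_lt {x : ℤ} (hx : x < u) : frameSeq k s u x = 0 :=
  if_neg (by omega)

lemma frameSeq_eq_zero_of_le (hs : AntitoneOn s (Set.Icc 1 k)) {x : ℤ}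
    (hx : u + 2 * s 1 ≤ x + 1) : frameSeq k s u x = 0 := by
  unfold frameSeq
  split_ifs
  · exact mIdx_eq_zero_of_le hs (by omega)
  · rfl

end frameSeq

def ShiftedRunsAgree (k : ℕ) (s : ℕ → ℕ) (u : ℤ) (i : ℕ) (G G' : ℤ → ℕ) : Prop :=
  (∀ x, u - 1 + 2 * i ≤ x → G' x = G x) ∧
  (∀ x, x < u - 1 + 2 * i → G' x = frameSeq k s (u - 1) x) ∧
  (∀ x, x < u + 2 * i → G x = frameSeq k s u x)

section ShiftedRunsAgree

variable {k : ℕ} {s : ℕ → ℕ} {u : ℤ}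

lemma shiftedRunsAgree_frameSeq (hs : AntitoneOn s (Set.Icc 1 k)) :
    ShiftedRunsAgree k s u (s 1) (frameSeq k s u) (frameSeq k s (u - 1)) := by
  refine ⟨fun x hx => ?_, fun _ _ => rfl, fun _ _ => rfl⟩
  rw [frameSeq_eq_zero_of_le k s u hs (by omega),
    frameSeq_eq_zero_of_le k s (u - 1) hs (by omega)]

lemma ShiftedRunsAgree.step {i n : ℕ} {G G' H H' : ℤ → ℕ} {v v' : ℤ}
    (hi : ShiftedRunsAgree k s u (i + 1) G G') (h : PPM (G, u + 2 * i) n (H, v))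
    (h' : PPM (G', u - 1 + 2 * i) (n + mIdx k s i) (H', v')) :
    ShiftedRunsAgree k s u i H H' := by
  obtain ⟨hR, hL', hL⟩ := hi
  push_cast at hR hL' hL
  rw [show u + 2 * (i : ℤ) = u - 1 + 2 * i + 1 by ring] at h
  refine ⟨PPM.eqOn_of_pile_shift h h' ?_ ?_ ?_ ?_ ?_ fun x hx => hR x (by omega),
    fun x hx => (h'.apply_of_lt hx).trans (hL' x (by omega)),
    fun x hx => (h.apply_of_lt (by omega)).trans (hL x (by omega))⟩
  · rw [hL' _ (by omega), frameSeq_add_two_mul]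
  · rw [hL' _ (by omega), frameSeq_eq_zero_of_emod_two_eq_one k s _ (by omega)]
  · rw [hR _ (by omega), hL _ (by omega),
      frameSeq_eq_zero_of_emod_two_eq_one k s _ (by omega)]
  · rw [hL _ (by omega), frameSeq_eq_zero_of_emod_two_eq_one k s _ (by omega)]
  · rw [hL _ (by omega), ← frameSeq_add_two_mul k s u i]
    congr 1
    ring

lemma ShiftedRunsAgree.eq {G G' : ℤ → ℕ} (h : ShiftedRunsAgree k s u 0 G G') : G' = G := by
  obtain ⟨hR, hL', hL⟩ := h
  push_cast at hR hL' hL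
  funext x
  rcases le_or_gt (u - 1) x with hx | hx
  · exact hR x (by omega)
  · rw [hL' x (by omega), hL x (by omega), frameSeq_eq_zero_of_lt k s _ (by omega),
      frameSeq_eq_zero_of_lt k s _ (by omega)]

end ShiftedRunsAgree

theorem stmt16_general (k : ℕ) (s : ℕ → ℕ)
    (hdec : ∀ m, 1 ≤ m → m ≤ k → s (m+1) ≤ s m)
    (P : ℕ → ℕ)
    (u : ℤ) (R R' : ℤ → ℕ)
    (hR : IsLambda k s u P R)
    (hR' : IsLambda k s (u - 1) (fun i => P i + mIdx k s i) R') :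
    R' = R := by
  obtain ⟨g, hg, hgP, rfl⟩ := hR
  obtain ⟨g', hg', hgP', rfl⟩ := hR'
  have hs : AntitoneOn s (Set.Icc 1 k) :=
    antitoneOn_of_add_one_le Set.ordConnected_Icc fun m _ hm _ => hdec m hm.1 hm.2
  have hagree : ∀ i ≤ s 1, ShiftedRunsAgree k s u i (g i) (g' i) := by
    intro i hi
    induction hi using Nat.decreasingInduction with
    | self => exact hg ▸ hg' ▸ shiftedRunsAgree_frameSeq hs
    | of_succ i hi ih =>
      obtain ⟨v, hv⟩ := hgP i hi
      obtain ⟨v', hv'⟩ := hgP' i hi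
      exact ih.step hv hv'
  exact (hagree 0 (Nat.zero_le _)).eq

/-- Shift invariance of the insertion map `Λ` (Proposition `prop:shift` of the paper):
if `λ⁺` is obtained from the `k`-tuple `λ` by adding `m` to each part of `λ^{(m)}`
(so its renamed parts are `P i + mIdx i`), then
`Λ(λ⁺, fs_{u-1}(λ⁺)) = Λ(λ, fs_u(λ))` (note `fs_{u-1}(λ⁺) = fs_{u-1}(λ)`). -/
theorem stmt16 (k : ℕ) (hk : 1 ≤ k) (s : ℕ → ℕ)
    (hdec : ∀ m, 1 ≤ m → m ≤ k → s (m+1) ≤ s m) (hsk : s (k+1) = 0)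
    (P : ℕ → ℕ)
    (hpart : ∀ i, i + 1 < s 1 → mIdx k s i = mIdx k s (i+1) → P i ≤ P (i+1))
    (u : ℤ) (R R' : ℤ → ℕ)
    (hR : IsLambda k s u P R)
    (hR' : IsLambda k s (u - 1) (fun i => P i + mIdx k s i) R') :
    R' = R :=
  stmt16_general k s hdec P u R R' hR hR'
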